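/- Let Ω ⊆ ℝⁿ be open, x₀ ∈ Ω, and suppose u(x) = g(x) + K‖x‖² on a ball B(x₀, δ) ⊆ Ω, where g is concave on B(x₀, δ) and K ∈ ℝ. Set f := −g. Then D*u(x₀) = −D*f(x₀) + 2Kx₀ and D⁺u(x₀) = −∂f(x₀) + 2Kx₀, where ∂f(x₀) is the subdifferential of the convex function f at x₀. -/

import Mathlib

/-!
Near `x₀` we have `u = -f + K‖·‖²` with `f := -g` convex, so `u` and `f` are differentiable at the
same points and `∇u(y) = -∇f(y) + 2Ky`; as `y ↦ 2Ky` is continuous this gives the first identity,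
and since `a ↦ -a + 2Kx₀` is affine it commutes with convex hulls, so the second one reduces to
`conv D*f(x₀) = ∂f(x₀)` for a convex `f`.

Passing to the limit in the gradient inequality gives `D*f(x₀) ⊆ ∂f(x₀)`, and `∂f(x₀)` is convex.
Conversely, `f` is Lipschitz near `x₀`, so `D*f(x₀)` is compact and so is its convex hull. If
`p ∈ ∂f(x₀)` were strictly separated from it by a direction `v`, pick points `y` of
differentiability (dense by Rademacher) close to `x₀ + t v`: monotonicity of the subdifferential,
`⟪∇f(y) - p, y - x₀⟫ ≥ 0`, divided by `t`, gives `⟪v, ∇f(y)⟫ ≳ ⟪v, p⟫`, and a limit of such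
gradients is a reachable gradient beating the separating hyperplane.
-/

open Set Filter Topology
open scoped RealInnerProductSpace

noncomputable section

/-- The set of reachable gradients `D*u(x)` of `u` at `x` relative to the set `Ω`. -/
def reachableGradients {n : ℕ} (Ω : Set (EuclideanSpace ℝ (Fin n)))
    (u : EuclideanSpace ℝ (Fin n) → ℝ) (x : EuclideanSpace ℝ (Fin n)) :
    Set (EuclideanSpace ℝ (Fin n)) :=
  {p | ∃ xs : ℕ → EuclideanSpace ℝ (Fin n), (∀ i, xs i ∈ Ω) ∧
    (∀ i, DifferentiableAt ℝ u (xs i)) ∧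
    Tendsto xs atTop (𝓝 x) ∧ Tendsto (fun i => gradient u (xs i)) atTop (𝓝 p)}

/-- The subdifferential of `f` at `x` relative to the set `B`. -/
def subdiff {n : ℕ} (B : Set (EuclideanSpace ℝ (Fin n)))
    (f : EuclideanSpace ℝ (Fin n) → ℝ) (x : EuclideanSpace ℝ (Fin n)) :
    Set (EuclideanSpace ℝ (Fin n)) :=
  {v | ∀ y ∈ B, f x + ⟪v, y - x⟫ ≤ f y}

theorem IsCompact.convexHull {E : Type*} [NormedAddCommGroup E] [NormedSpace ℝ E]
    [FiniteDimensional ℝ E] {s : Set E} (hs : IsCompact s) : IsCompact (convexHull ℝ s) := by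
  -- Carathéodory: a point of the hull is a convex combination of at most `dim E + 1` points of `s`.
  let combo (k : ℕ) (wz : (Fin k → ℝ) × (Fin k → E)) : E := ∑ i, wz.1 i • wz.2 i
  have hcover : _root_.convexHull ℝ s = ⋃ k ∈ Finset.range (Module.finrank ℝ E + 2),
      combo k '' (stdSimplex ℝ (Fin k) ×ˢ univ.pi fun _ => s) := by
    refine Subset.antisymm (fun p hp => ?_) (iUnion₂_subset fun k _ => ?_)
    · obtain ⟨ι, _, z, w, hzs, hz, hw, hw1, rfl⟩ := eq_pos_convex_span_of_mem_convexHull hp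
      have hcard : Fintype.card ι < Module.finrank ℝ E + 2 := by
        have := Submodule.finrank_le (vectorSpan ℝ (range z))
        have := hz.card_le_finrank_succ
        omega
      let e := (Fintype.equivFin ι).symm
      refine mem_biUnion (Finset.mem_range.2 hcard) ⟨(w ∘ e, z ∘ e), ⟨⟨fun i => (hw _).le, ?_⟩,
        fun i _ => hzs (mem_range_self _)⟩, e.sum_comp fun i => w i • z i⟩
      simpa [Function.comp_def] using (e.sum_comp w).trans hw1
    · rintro _ ⟨⟨w, z⟩, ⟨hw, hz⟩, rfl⟩
      exact (convex_convexHull ℝ s).sum_mem (fun i _ => hw.1 i) hw.2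
        fun i _ => subset_convexHull ℝ s (hz i (mem_univ i))
  rw [hcover]
  refine (Finset.range _).isCompact_biUnion fun k _ =>
    ((isCompact_stdSimplex ℝ (Fin k)).prod (isCompact_univ_pi fun _ => hs)).image ?_
  fun_prop

theorem LipschitzOnWith.exists_differentiableAt_dist_lt {E F : Type*} [NormedAddCommGroup E]
    [NormedSpace ℝ E] [FiniteDimensional ℝ E] [NormedAddCommGroup F] [NormedSpace ℝ F]
    [FiniteDimensional ℝ F] {f : E → F} {L : NNReal} {U : Set E} (hf : LipschitzOnWith L f U)
    (hU : IsOpen U) {x : E} (hx : x ∈ U) {ε : ℝ} (hε : 0 < ε) :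
    ∃ y ∈ U, DifferentiableAt ℝ f y ∧ dist y x < ε := by
  let _ : MeasurableSpace E := borel E
  have _ : BorelSpace E := ⟨rfl⟩
  have hdense := MeasureTheory.Measure.dense_of_ae
    (hf.ae_differentiableWithinAt_of_mem (μ := (Module.finBasis ℝ E).addHaar))
  obtain ⟨y, ⟨hyU, hyx⟩, hyd⟩ := hdense.inter_open_nonempty _ (hU.inter Metric.isOpen_ball)
    ⟨x, hx, Metric.mem_ball_self hε⟩
  exact ⟨y, hyU, (hyd hyU).differentiableAt (hU.mem_nhds hyU), hyx⟩

theorem convexHull_image_neg_add {E : Type*} [AddCommGroup E] [Module ℝ E] (c : E) (s : Set E) :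
    convexHull ℝ ((fun a => -a + c) '' s) = (fun a => -a + c) '' convexHull ℝ s :=
  ((-LinearMap.id).toAffineMap + AffineMap.const ℝ E c).image_convexHull s |>.symm

theorem hasGradientAt_const_mul_norm_sq {E : Type*} [NormedAddCommGroup E]
    [InnerProductSpace ℝ E] [CompleteSpace E] (K : ℝ) (x : E) :
    HasGradientAt (fun y => K * ‖y‖ ^ 2) ((2 * K) • x) x := by
  rw [hasGradientAt_iff_hasFDerivAt]
  refine ((hasStrictFDerivAt_norm_sq x).hasFDerivAt.const_mul K).congr_fderiv ?_
  ext w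
  simp
  ring

section EuclideanSpace

variable {n : ℕ}

local notation "𝔼" => EuclideanSpace ℝ (Fin n)

theorem reachableGradients_eq_preimage_closure (Ω : Set 𝔼) (u : 𝔼 → ℝ) (x : 𝔼) :
    reachableGradients Ω u x = (fun p => (x, p)) ⁻¹'
      closure {q : 𝔼 × 𝔼 | q.1 ∈ Ω ∧ DifferentiableAt ℝ u q.1 ∧ gradient u q.1 = q.2} := by
  ext p
  simp only [mem_preimage, mem_closure_iff_seq_limit, nhds_prod_eq, tendsto_prod_iff']
  constructor
  · rintro ⟨xs, hΩ, hd, hx, hp⟩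
    exact ⟨fun i => (xs i, gradient u (xs i)), fun i => ⟨hΩ i, hd i, rfl⟩, hx, hp⟩
  · rintro ⟨qs, hqs, hx, hp⟩
    refine ⟨fun i => (qs i).1, fun i => (hqs i).1, fun i => (hqs i).2.1, hx, ?_⟩
    simpa only [(hqs _).2.2] using hp

theorem isClosed_reachableGradients (Ω : Set 𝔼) (u : 𝔼 → ℝ) (x : 𝔼) :
    IsClosed (reachableGradients Ω u x) := by
  rw [reachableGradients_eq_preimage_closure]
  exact isClosed_closure.preimage (by fun_prop)

theorem reachableGradients_inter_of_mem_nhds {Ω U : Set 𝔼} {u : 𝔼 → ℝ} {x : 𝔼} (hU : U ∈ 𝓝 x) :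
    reachableGradients (Ω ∩ U) u x = reachableGradients Ω u x := by
  refine Subset.antisymm (fun p ⟨xs, hΩ, hd, hx, hp⟩ => ⟨xs, fun i => (hΩ i).1, hd, hx, hp⟩) ?_
  rintro p ⟨xs, hΩ, hd, hx, hp⟩
  obtain ⟨N, hN⟩ := eventually_atTop.1 (hx.eventually hU)
  have hshift := tendsto_add_atTop_nat N
  exact ⟨fun i => xs (i + N), fun i => ⟨hΩ _, hN _ (Nat.le_add_left N i)⟩, fun i => hd _,
    hx.comp hshift, hp.comp hshift⟩

theorem reachableGradients_congr {Ω : Set 𝔼} (hΩ : IsOpen Ω) {u v : 𝔼 → ℝ} (huv : EqOn u v Ω)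
    (x : 𝔼) : reachableGradients Ω u x = reachableGradients Ω v x := by
  have hev : ∀ y ∈ Ω, u =ᶠ[𝓝 y] v := fun y hy => eventually_of_mem (hΩ.mem_nhds hy) huv
  ext p
  refine exists_congr fun xs => and_congr_right fun hxs => ?_
  have hd (i : ℕ) := (hev _ (hxs i)).differentiableAt_iff (𝕜 := ℝ)
  have hg (i : ℕ) := (hev _ (hxs i)).gradient_eq
  simp only [hd, hg]

theorem reachableGradients_neg_add_of_hasGradientAt (Ω : Set 𝔼) (f : 𝔼 → ℝ) {h : 𝔼 → ℝ}
    {G : 𝔼 → 𝔼} (hh : ∀ y, HasGradientAt h (G y) y) {x : 𝔼} (hG : ContinuousAt G x) :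
    reachableGradients Ω (fun y => -f y + h y) x =
      (fun a => -a + G x) '' reachableGradients Ω f x := by
  have hdiff (y : 𝔼) : DifferentiableAt ℝ (fun z => -f z + h z) y ↔ DifferentiableAt ℝ f y :=
    ((hh y).differentiableAt.add_iff_left).trans differentiableAt_fun_neg_iff
  have hgrad (y : 𝔼) (hy : DifferentiableAt ℝ f y) :
      gradient (fun z => -f z + h z) y = -gradient f y + G y := by
    rw [← (hh y).gradient, gradient, fderiv_fun_add hy.fun_neg (hh y).differentiableAt,
      fderiv_fun_neg, map_add, map_neg, gradient, gradient]
  ext p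
  constructor
  · rintro ⟨xs, hΩ, hd, hx, hp⟩
    have hd' i := (hdiff (xs i)).1 (hd i)
    have hq : Tendsto (fun i => gradient f (xs i)) atTop (𝓝 (-p + G x)) :=
      (hp.neg.add (hG.tendsto.comp hx)).congr fun i => by simp [hgrad _ (hd' i)]
    exact ⟨_, ⟨xs, hΩ, hd', hx, hq⟩, by simp⟩
  · rintro ⟨q, ⟨xs, hΩ, hd, hx, hq⟩, rfl⟩
    refine ⟨xs, hΩ, fun i => (hdiff _).2 (hd i), hx, ?_⟩
    simp only [hgrad _ (hd _)]
    exact hq.neg.add (hG.tendsto.comp hx)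

theorem convex_subdiff (B : Set 𝔼) (f : 𝔼 → ℝ) (x : 𝔼) : Convex ℝ (subdiff B f x) := by
  intro v hv w hw a b ha hb hab y hy
  have hvy := hv y hy
  have hwy := hw y hy
  calc f x + ⟪a • v + b • w, y - x⟫ = a * (f x + ⟪v, y - x⟫) + b * (f x + ⟪w, y - x⟫) := by
        rw [inner_add_left, real_inner_smul_left, real_inner_smul_left]
        linear_combination (-f x) * hab
    _ ≤ a * f y + b * f y := by gcongr
    _ = f y := by linear_combination f y * hab

theorem inner_sub_sub_nonneg_of_mem_subdiff {B : Set 𝔼} {f : 𝔼 → ℝ} {x y v w : 𝔼} (hx : x ∈ B)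
    (hy : y ∈ B) (hv : v ∈ subdiff B f x) (hw : w ∈ subdiff B f y) : 0 ≤ ⟪w - v, y - x⟫ := by
  have hvy := hv y hy
  have hwx := hw x hx
  rw [← neg_sub y x, inner_neg_right] at hwx
  rw [inner_sub_left]
  linarith

theorem ConvexOn.gradient_mem_subdiff {B : Set 𝔼} {f : 𝔼 → ℝ} (hf : ConvexOn ℝ B f) {x : 𝔼}
    (hx : x ∈ B) (hd : DifferentiableAt ℝ f x) : gradient f x ∈ subdiff B f x := by
  intro y hy
  set ℓ := AffineMap.lineMap (k := ℝ) x y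
  have hℓ0 : ℓ 0 = x := AffineMap.lineMap_apply_zero x y
  have hℓ1 : ℓ 1 = y := AffineMap.lineMap_apply_one x y
  have hfℓ : HasFDerivAt f (fderiv ℝ f x) (ℓ 0) := by rw [hℓ0]; exact hd.hasFDerivAt
  have hderiv : HasDerivAt (f ∘ ℓ) (fderiv ℝ f x (y - x)) 0 :=
    hfℓ.comp_hasDerivAt 0 AffineMap.hasDerivAt_lineMap
  have hslope := (hf.comp_affineMap ℓ).le_slope_of_hasDerivAt (x := 0) (y := 1)
    (by simpa [hℓ0] using hx) (by simpa [hℓ1] using hy) zero_lt_one hderiv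
  rw [slope_def_field, Function.comp_apply, Function.comp_apply, hℓ0, hℓ1] at hslope
  rw [gradient, InnerProductSpace.toDual_symm_apply]
  linarith

theorem ConvexOn.reachableGradients_subset_subdiff {B : Set 𝔼} (hB : IsOpen B) {f : 𝔼 → ℝ}
    (hf : ConvexOn ℝ B f) {x : 𝔼} (hx : x ∈ B) : reachableGradients B f x ⊆ subdiff B f x := by
  rintro p ⟨xs, hxsB, hd, hxs, hp⟩ y hy
  have hfxs : Tendsto (fun i => f (xs i)) atTop (𝓝 (f x)) :=
    ((hf.continuousOn hB).continuousAt (hB.mem_nhds hx)).tendsto.comp hxs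
  exact le_of_tendsto_of_tendsto' (hfxs.add (hp.inner (tendsto_const_nhds.sub hxs)))
    tendsto_const_nhds fun i => hf.gradient_mem_subdiff (hxsB i) (hd i) y hy

theorem LipschitzOnWith.norm_gradient_le {U : Set 𝔼} {f : 𝔼 → ℝ} {L : NNReal}
    (hf : LipschitzOnWith L f U) {x : 𝔼} (hU : U ∈ 𝓝 x) : ‖gradient f x‖ ≤ L :=
  ((InnerProductSpace.toDual ℝ 𝔼).symm.norm_map _).trans_le (norm_fderiv_le_of_lipschitzOn ℝ hU hf)

theorem LipschitzOnWith.isCompact_reachableGradients {U : Set 𝔼} (hU : IsOpen U) {f : 𝔼 → ℝ}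
    {L : NNReal} (hf : LipschitzOnWith L f U) (x : 𝔼) :
    IsCompact (reachableGradients U f x) := by
  refine (isCompact_closedBall 0 (L : ℝ)).of_isClosed_subset (isClosed_reachableGradients U f x) ?_
  rintro p ⟨xs, hxsU, -, -, hp⟩
  exact mem_closedBall_zero_iff.2 <|
    le_of_tendsto' hp.norm fun i => hf.norm_gradient_le (hU.mem_nhds (hxsU i))

theorem ConvexOn.exists_inner_gradient_ge_of_mem_subdiff {U : Set 𝔼} (hU : IsOpen U)
    {f : 𝔼 → ℝ} (hf : ConvexOn ℝ U f) {L : NNReal} (hL : LipschitzOnWith L f U) {x p : 𝔼}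
    (hx : x ∈ U) (hp : p ∈ subdiff U f x) (v : 𝔼) {ε : ℝ}
    (hε : 0 < ε) : ∃ y ∈ U, DifferentiableAt ℝ f y ∧ dist y x < ε ∧
      ⟪v, p⟫ - ε ≤ ⟪v, gradient f y⟫ := by
  -- `y` will be within `t * η` of `x + t • v`; after dividing by `t` this costs at most `M * η`.
  set M := (L : ℝ) + ‖p‖
  set η := ε / (M + 1)
  have hM : 0 ≤ M := by positivity
  have hη : 0 < η := by positivity
  have hMη : M * η < ε := by
    rw [mul_div_assoc', div_lt_iff₀ (by positivity)]
    nlinarith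
  have hsmall : ∀ᶠ t in 𝓝 (0 : ℝ), x + t • v ∈ U ∧ t * (‖v‖ + η) < ε := by
    have hline : Tendsto (fun t : ℝ => x + t • v) (𝓝 0) (𝓝 x) :=
      (by fun_prop : Continuous fun t : ℝ => x + t • v).tendsto' 0 x (by simp)
    have hscale : Tendsto (fun t : ℝ => t * (‖v‖ + η)) (𝓝 0) (𝓝 0) :=
      (by fun_prop : Continuous fun t : ℝ => t * (‖v‖ + η)).tendsto' 0 0 (zero_mul _)
    exact (hline.eventually (hU.mem_nhds hx)).and (hscale.eventually (gt_mem_nhds hε))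
  obtain ⟨t, ⟨hzU, htε⟩, ht⟩ :=
    ((eventually_nhdsWithin_of_eventually_nhds hsmall).and
      (eventually_mem_nhdsWithin (s := Ioi 0))).exists
  obtain ⟨y, hyU, hyd, hyz⟩ := hL.exists_differentiableAt_dist_lt hU hzU (mul_pos ht hη)
  have hzx : dist (x + t • v) x = t * ‖v‖ := by
    rw [dist_self_add_left, norm_smul, Real.norm_of_nonneg (le_of_lt ht)]
  refine ⟨y, hyU, hyd, ?_, ?_⟩
  · calc dist y x ≤ dist y (x + t • v) + dist (x + t • v) x := dist_triangle _ _ _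
      _ < t * (‖v‖ + η) := by rw [hzx]; linarith
      _ < ε := htε
  set w := gradient f y - p
  have hw : ‖w‖ ≤ M := (norm_sub_le _ _).trans
    (add_le_add_left (hL.norm_gradient_le (hU.mem_nhds hyU)) _)
  have hmono : 0 ≤ ⟪w, y - x⟫ :=
    inner_sub_sub_nonneg_of_mem_subdiff hx hyU hp (hf.gradient_mem_subdiff hyU hyd)
  have hsplit : ⟪w, y - x⟫ ≤ t * (⟪v, w⟫ + M * η) := by
    have hyx : y - x = t • v + (y - (x + t • v)) := by abel
    have herr : ⟪w, y - (x + t • v)⟫ ≤ M * (t * η) := by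
      refine (real_inner_le_norm _ _).trans (mul_le_mul hw ?_ (norm_nonneg _) hM)
      rw [← dist_eq_norm]
      exact hyz.le
    rw [hyx, inner_add_right, real_inner_smul_right, real_inner_comm]
    linarith
  have hvw : 0 ≤ ⟪v, w⟫ + M * η := nonneg_of_mul_nonneg_right (hmono.trans hsplit) ht
  rw [inner_sub_right] at hvw
  linarith

theorem ConvexOn.exists_mem_reachableGradients_inner_ge {U : Set 𝔼} (hU : IsOpen U)
    {f : 𝔼 → ℝ} (hf : ConvexOn ℝ U f) {L : NNReal} (hL : LipschitzOnWith L f U) {x p : 𝔼}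
    (hx : x ∈ U) (hp : p ∈ subdiff U f x) (v : 𝔼) :
    ∃ q ∈ reachableGradients U f x, ⟪v, p⟫ ≤ ⟪v, q⟫ := by
  choose ys hysU hysd hysx hysv using fun m : ℕ =>
    hf.exists_inner_gradient_ge_of_mem_subdiff hU hL hx hp v
      (Nat.one_div_pos_of_nat : (0 : ℝ) < 1 / ((m : ℝ) + 1))
  have hys : Tendsto ys atTop (𝓝 x) :=
    tendsto_iff_dist_tendsto_zero.2 <| squeeze_zero (fun _ => dist_nonneg) (fun m => (hysx m).le)
      tendsto_one_div_add_atTop_nhds_zero_nat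
  obtain ⟨q, -, φ, hφ, hq⟩ := (isCompact_closedBall (0 : 𝔼) L).tendsto_subseq fun m =>
    mem_closedBall_zero_iff.2 (hL.norm_gradient_le (hU.mem_nhds (hysU m)))
  refine ⟨q, ⟨ys ∘ φ, fun m => hysU _, fun m => hysd _, hys.comp hφ.tendsto_atTop, hq⟩, ?_⟩
  have hlower : Tendsto (fun m => ⟪v, p⟫ - 1 / ((φ m : ℝ) + 1)) atTop (𝓝 ⟪v, p⟫) := by
    simpa using (tendsto_const_nhds (x := ⟪v, p⟫)).sub
      ((tendsto_one_div_add_atTop_nhds_zero_nat (𝕜 := ℝ)).comp hφ.tendsto_atTop)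
  exact le_of_tendsto_of_tendsto' hlower (tendsto_const_nhds.inner hq) fun m => hysv (φ m)

theorem ConvexOn.subdiff_subset_convexHull_reachableGradients {U : Set 𝔼} (hU : IsOpen U)
    {f : 𝔼 → ℝ} (hf : ConvexOn ℝ U f) {L : NNReal} (hL : LipschitzOnWith L f U) {x : 𝔼}
    (hx : x ∈ U) : subdiff U f x ⊆ convexHull ℝ (reachableGradients U f x) := by
  intro p hp
  by_contra hpD
  obtain ⟨l, c, hlD, hlp⟩ := geometric_hahn_banach_closed_point (convex_convexHull ℝ _)
    (hL.isCompact_reachableGradients hU x).convexHull.isClosed hpD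
  set v := (InnerProductSpace.toDual ℝ 𝔼).symm l
  have hl (a : 𝔼) : l a = ⟪v, a⟫ := InnerProductSpace.toDual_symm_apply.symm
  obtain ⟨q, hq, hpq⟩ := hf.exists_mem_reachableGradients_inner_ge hU hL hx hp v
  have hqc := hlD q (subset_convexHull ℝ _ hq)
  rw [hl] at hqc hlp
  linarith

theorem ConvexOn.convexHull_reachableGradients_eq_subdiff {B : Set 𝔼} (hB : IsOpen B)
    {f : 𝔼 → ℝ} (hf : ConvexOn ℝ B f) {x : 𝔼} (hx : x ∈ B) :
    convexHull ℝ (reachableGradients B f x) = subdiff B f x := by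
  refine (convexHull_min (hf.reachableGradients_subset_subdiff hB hx)
    (convex_subdiff B f x)).antisymm ?_
  -- `f` is only locally Lipschitz, but on a smaller ball `∂f(x)` grows and `D*f(x)` is unchanged.
  obtain ⟨L, V, hV, hL⟩ := hf.locallyLipschitzOn hB hx
  rw [hB.nhdsWithin_eq hx] at hV
  obtain ⟨r, hr, hrV⟩ := Metric.mem_nhds_iff.1 (inter_mem hV (hB.mem_nhds hx))
  have hrB : Metric.ball x r ⊆ B := hrV.trans inter_subset_right
  calc subdiff B f x ⊆ subdiff (Metric.ball x r) f x := fun p hp y hy => hp y (hrB hy)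
    _ ⊆ convexHull ℝ (reachableGradients (Metric.ball x r) f x) :=
      (hf.subset hrB (convex_ball x r)).subdiff_subset_convexHull_reachableGradients
        Metric.isOpen_ball (hL.mono (hrV.trans inter_subset_left)) (Metric.mem_ball_self hr)
    _ = convexHull ℝ (reachableGradients B f x) := by
      rw [← reachableGradients_inter_of_mem_nhds (Ω := B) (Metric.ball_mem_nhds x hr),
        inter_eq_right.2 hrB]

end EuclideanSpace

theorem reachableGradients_superdifferential_of_semiconcave_rep_general {n : ℕ}
    (Ω : Set (EuclideanSpace ℝ (Fin n)))
    (x₀ : EuclideanSpace ℝ (Fin n)) (δ : ℝ) (hδ : 0 < δ)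
    (hball : Metric.ball x₀ δ ⊆ Ω)
    (u g : EuclideanSpace ℝ (Fin n) → ℝ) (K : ℝ)
    (hg : ConcaveOn ℝ (Metric.ball x₀ δ) g)
    (hu : ∀ x ∈ Metric.ball x₀ δ, u x = g x + K * ‖x‖ ^ 2) :
    reachableGradients Ω u x₀ =
      (fun a => -a + (2 * K) • x₀) ''
        reachableGradients (Metric.ball x₀ δ) (fun x => -g x) x₀ ∧
    convexHull ℝ (reachableGradients Ω u x₀) =
      (fun a => -a + (2 * K) • x₀) '' subdiff (Metric.ball x₀ δ) (fun x => -g x) x₀ := by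
  have hu' : EqOn u (fun y => -(-g y) + K * ‖y‖ ^ 2) (Metric.ball x₀ δ) := fun y hy => by
    simp [hu y hy]
  have hD : reachableGradients Ω u x₀ =
      (fun a => -a + (2 * K) • x₀) '' reachableGradients (Metric.ball x₀ δ) (fun x => -g x) x₀ := by
    rw [← reachableGradients_inter_of_mem_nhds (Metric.ball_mem_nhds x₀ hδ), inter_eq_right.2 hball,
      reachableGradients_congr Metric.isOpen_ball hu',
      reachableGradients_neg_add_of_hasGradientAt _ _ (hasGradientAt_const_mul_norm_sq K)
        (by fun_prop)]
  have hf : ConvexOn ℝ (Metric.ball x₀ δ) fun x => -g x := hg.neg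
  refine ⟨hD, ?_⟩
  rw [hD, convexHull_image_neg_add,
    hf.convexHull_reachableGradients_eq_subdiff Metric.isOpen_ball (Metric.mem_ball_self hδ)]

/-- If `u = g + K‖·‖²` on a ball `B(x₀, δ) ⊆ Ω` with `g` concave, then, with `f := -g`,
`D*u(x₀) = -D*f(x₀) + 2Kx₀` and `D⁺u(x₀) = conv D*u(x₀) = -∂f(x₀) + 2Kx₀`. -/
theorem reachableGradients_superdifferential_of_semiconcave_rep {n : ℕ}
    (Ω : Set (EuclideanSpace ℝ (Fin n))) (hΩ : IsOpen Ω)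
    (x₀ : EuclideanSpace ℝ (Fin n)) (hx₀ : x₀ ∈ Ω) (δ : ℝ) (hδ : 0 < δ)
    (hball : Metric.ball x₀ δ ⊆ Ω)
    (u g : EuclideanSpace ℝ (Fin n) → ℝ) (K : ℝ)
    (hg : ConcaveOn ℝ (Metric.ball x₀ δ) g)
    (hu : ∀ x ∈ Metric.ball x₀ δ, u x = g x + K * ‖x‖ ^ 2) :
    reachableGradients Ω u x₀ =
      (fun a => -a + (2 * K) • x₀) ''
        reachableGradients (Metric.ball x₀ δ) (fun x => -g x) x₀ ∧
    convexHull ℝ (reachableGradients Ω u x₀) =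
      (fun a => -a + (2 * K) • x₀) '' subdiff (Metric.ball x₀ δ) (fun x => -g x) x₀ :=
  reachableGradients_superdifferential_of_semiconcave_rep_general Ω x₀ δ hδ hball u g K hg hu
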